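/- Let A, B, C be unital ℂ-algebras with B commutative. Let Δ : A → A ⊗ A be a unital algebra homomorphism that is coassociative: (Δ ⊗ id_A) ∘ Δ = (id_A ⊗ Δ) ∘ Δ. Suppose (C, Φ) is a quantum family of all maps from B to A, i.e. Φ : A → B ⊗ C is a unital algebra homomorphism such that for every unital ℂ-algebra D and every unital algebra homomorphism Ψ : A → B ⊗ D there is a unique unital algebra homomorphism Γ : C → D with (id_B ⊗ Γ) ∘ Φ = Ψ. Let m : B ⊗ B → B be the multiplication homomorphism (m(b ⊗ b') = bb', an algebra homomorphism since B is commutative) and F : C ⊗ B → B ⊗ C the flip isomorphism (c ⊗ b ↦ b ⊗ c). Then there is a unique unital algebra homomorphism Γ : C → C ⊗ C satisfying (id_B ⊗ Γ) ∘ Φ = (m ⊗ id_{C⊗C}) ∘ (id_B ⊗ F ⊗ id_C) ∘ (Φ ⊗ Φ) ∘ Δ, and this Γ is coassociative: (Γ ⊗ id_C) ∘ Γ = (id_C ⊗ Γ) ∘ Γ. -/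

import Mathlib

open TensorProduct

section

variable (A B C : Type) [Ring A] [CommRing B] [Ring C]
  [Algebra ℂ A] [Algebra ℂ B] [Algebra ℂ C]

/-- The composite `(m ⊗ id_{C⊗C}) ∘ (id_B ⊗ F ⊗ id_C) ∘ (Φ ⊗ Φ) ∘ Δ : A → B ⊗ (C ⊗ C)`,
where `m : B ⊗ B → B` is the multiplication homomorphism, `F : C ⊗ B → B ⊗ C` the flip,
and the canonical associativity identifications of tensor products (implicit in the
classical notation) are inserted explicitly. -/
noncomputable def comulRHS (Δ : A →ₐ[ℂ] A ⊗[ℂ] A) (Φ : A →ₐ[ℂ] B ⊗[ℂ] C) :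
    A →ₐ[ℂ] B ⊗[ℂ] (C ⊗[ℂ] C) :=
  -- m ⊗ id_{C ⊗ C}
  (Algebra.TensorProduct.map (Algebra.TensorProduct.lmul' ℂ (S := B))
      (AlgHom.id ℂ (C ⊗[ℂ] C))).comp <|
  -- reassociation (B ⊗ ((B ⊗ C) ⊗ C) ≃ (B ⊗ B) ⊗ (C ⊗ C))
  (((Algebra.TensorProduct.congr (AlgEquiv.refl (A₁ := B))
        (Algebra.TensorProduct.assoc ℂ ℂ ℂ B C C)).trans
      (Algebra.TensorProduct.assoc ℂ ℂ ℂ B B (C ⊗[ℂ] C)).symm).toAlgHom).comp <|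
  -- id_B ⊗ F ⊗ id_C
  (Algebra.TensorProduct.map (AlgHom.id ℂ B)
      (Algebra.TensorProduct.map ((Algebra.TensorProduct.comm ℂ C B) : C ⊗[ℂ] B →ₐ[ℂ] B ⊗[ℂ] C)
        (AlgHom.id ℂ C))).comp <|
  -- reassociation ((B ⊗ C) ⊗ (B ⊗ C) ≃ B ⊗ ((C ⊗ B) ⊗ C))
  ((((Algebra.TensorProduct.assoc ℂ ℂ ℂ B C (B ⊗[ℂ] C)).trans
      (Algebra.TensorProduct.congr (AlgEquiv.refl (A₁ := B))
        (Algebra.TensorProduct.assoc ℂ ℂ ℂ C B C).symm)).toAlgHom).comp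
  -- (Φ ⊗ Φ) ∘ Δ
    ((Algebra.TensorProduct.map Φ Φ).comp Δ))

end

/-! Classically `Φ` is a family of maps from a space into a semigroup, and `comulRHS` is the
pointwise product of this family with itself. The pointwise product of quantum families is
natural in the parameter algebras and, by coassociativity of `Δ` and commutativity of `B`,
associative. Hence both `(Γ ⊗ id) ∘ Γ` and `(id ⊗ Γ) ∘ Γ` classify the triple product
`Φ ⋆ Φ ⋆ Φ`, and uniqueness in the universal property identifies them. -/

namespace QuantumFamily

open Algebra.TensorProduct (lmul' tensorTensorTensorComm one_def)

variable {R A B : Type*} [CommSemiring R] [Semiring A] [Algebra R A] [CommSemiring B] [Algebra R B]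
  {X Y Z X' Y' : Type*} [Semiring X] [Algebra R X] [Semiring Y] [Algebra R Y]
  [Semiring Z] [Algebra R Z] [Semiring X'] [Algebra R X'] [Semiring Y'] [Algebra R Y']

variable (R B X Y) in
noncomputable def mulLegs : (B ⊗[R] X) ⊗[R] (B ⊗[R] Y) →ₐ[R] B ⊗[R] (X ⊗[R] Y) :=
  (Algebra.TensorProduct.map (lmul' R) (AlgHom.id R (X ⊗[R] Y))).comp
    (tensorTensorTensorComm R R R R B X B Y).toAlgHom

@[simp] lemma mulLegs_tmul (b b' : B) (x : X) (y : Y) :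
    mulLegs R B X Y ((b ⊗ₜ x) ⊗ₜ (b' ⊗ₜ y)) = (b * b') ⊗ₜ (x ⊗ₜ y) := by
  simp [mulLegs]

lemma map_comp_mulLegs (f : X →ₐ[R] X') (g : Y →ₐ[R] Y') :
    (Algebra.TensorProduct.map (AlgHom.id R B) (Algebra.TensorProduct.map f g)).comp
        (mulLegs R B X Y) =
      (mulLegs R B X' Y').comp
        (Algebra.TensorProduct.map (Algebra.TensorProduct.map (AlgHom.id R B) f)
          (Algebra.TensorProduct.map (AlgHom.id R B) g)) := by
  ext : 1 <;> ext <;> simp [one_def]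

lemma map_assoc_comp_mulLegs :
    (Algebra.TensorProduct.map (AlgHom.id R B)
        (Algebra.TensorProduct.assoc R R R X Y Z).toAlgHom).comp
        ((mulLegs R B (X ⊗[R] Y) Z).comp
          (Algebra.TensorProduct.map (mulLegs R B X Y) (AlgHom.id R (B ⊗[R] Z)))) =
      (mulLegs R B X (Y ⊗[R] Z)).comp
        ((Algebra.TensorProduct.map (AlgHom.id R (B ⊗[R] X)) (mulLegs R B Y Z)).comp
          (Algebra.TensorProduct.assoc R R R (B ⊗[R] X) (B ⊗[R] Y) (B ⊗[R] Z)).toAlgHom) := by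
  ext : 1 <;> ext <;> simp [one_def]

lemma assoc_comp_map_map {P Q S : Type*} [Semiring P] [Algebra R P] [Semiring Q] [Algebra R Q]
    [Semiring S] [Algebra R S] (f : X →ₐ[R] P) (g : Y →ₐ[R] Q) (h : Z →ₐ[R] S) :
    (Algebra.TensorProduct.assoc R R R P Q S).toAlgHom.comp
        (Algebra.TensorProduct.map (Algebra.TensorProduct.map f g) h) =
      (Algebra.TensorProduct.map f (Algebra.TensorProduct.map g h)).comp
        (Algebra.TensorProduct.assoc R R R X Y Z).toAlgHom := by
  ext : 1 <;> ext <;> simp [one_def]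

variable (Δ : A →ₐ[R] A ⊗[R] A)

noncomputable def familyMul (Ψ₁ : A →ₐ[R] B ⊗[R] X) (Ψ₂ : A →ₐ[R] B ⊗[R] Y) :
    A →ₐ[R] B ⊗[R] (X ⊗[R] Y) :=
  (mulLegs R B X Y).comp ((Algebra.TensorProduct.map Ψ₁ Ψ₂).comp Δ)

lemma map_comp_familyMul (Ψ₁ : A →ₐ[R] B ⊗[R] X) (Ψ₂ : A →ₐ[R] B ⊗[R] Y)
    (f : X →ₐ[R] X') (g : Y →ₐ[R] Y') :
    (Algebra.TensorProduct.map (AlgHom.id R B) (Algebra.TensorProduct.map f g)).comp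
        (familyMul Δ Ψ₁ Ψ₂) =
      familyMul Δ ((Algebra.TensorProduct.map (AlgHom.id R B) f).comp Ψ₁)
        ((Algebra.TensorProduct.map (AlgHom.id R B) g).comp Ψ₂) := by
  rw [familyMul, familyMul, ← AlgHom.comp_assoc, map_comp_mulLegs, Algebra.TensorProduct.map_comp,
    AlgHom.comp_assoc, AlgHom.comp_assoc]

lemma familyMul_assoc
    (hΔ : (Algebra.TensorProduct.assoc R R R A A A).toAlgHom.comp
        ((Algebra.TensorProduct.map Δ (AlgHom.id R A)).comp Δ) =
      (Algebra.TensorProduct.map (AlgHom.id R A) Δ).comp Δ)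
    (Ψ₁ : A →ₐ[R] B ⊗[R] X) (Ψ₂ : A →ₐ[R] B ⊗[R] Y) (Ψ₃ : A →ₐ[R] B ⊗[R] Z) :
    (Algebra.TensorProduct.map (AlgHom.id R B)
        (Algebra.TensorProduct.assoc R R R X Y Z).toAlgHom).comp
        (familyMul Δ (familyMul Δ Ψ₁ Ψ₂) Ψ₃) =
      familyMul Δ Ψ₁ (familyMul Δ Ψ₂ Ψ₃) := by
  have split_left : Algebra.TensorProduct.map ((mulLegs R B X Y).comp
        ((Algebra.TensorProduct.map Ψ₁ Ψ₂).comp Δ)) Ψ₃ =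
      (Algebra.TensorProduct.map (mulLegs R B X Y) (AlgHom.id R (B ⊗[R] Z))).comp
        ((Algebra.TensorProduct.map (Algebra.TensorProduct.map Ψ₁ Ψ₂) Ψ₃).comp
          (Algebra.TensorProduct.map Δ (AlgHom.id R A))) := by
    ext : 1 <;> ext <;> simp
  have split_right : Algebra.TensorProduct.map Ψ₁ ((mulLegs R B Y Z).comp
        ((Algebra.TensorProduct.map Ψ₂ Ψ₃).comp Δ)) =
      (Algebra.TensorProduct.map (AlgHom.id R (B ⊗[R] X)) (mulLegs R B Y Z)).comp
        ((Algebra.TensorProduct.map Ψ₁ (Algebra.TensorProduct.map Ψ₂ Ψ₃)).comp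
          (Algebra.TensorProduct.map (AlgHom.id R A) Δ)) := by
    ext : 1 <;> ext <;> simp
  rw [familyMul, familyMul, familyMul, familyMul, split_left, split_right]
  simp only [AlgHom.comp_assoc]
  rw [← AlgHom.comp_assoc (mulLegs R B _ _),
    ← AlgHom.comp_assoc _ (AlgHom.comp (mulLegs R B _ _) _), map_assoc_comp_mulLegs]
  simp only [AlgHom.comp_assoc]
  rw [← AlgHom.comp_assoc _ (Algebra.TensorProduct.map (Algebra.TensorProduct.map Ψ₁ Ψ₂) Ψ₃),
    assoc_comp_map_map, AlgHom.comp_assoc, hΔ]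

lemma comulRHS_eq_familyMul {A B C : Type} [Ring A] [CommRing B] [Ring C]
    [Algebra ℂ A] [Algebra ℂ B] [Algebra ℂ C] (Δ : A →ₐ[ℂ] A ⊗[ℂ] A)
    (Φ : A →ₐ[ℂ] B ⊗[ℂ] C) :
    comulRHS A B C Δ Φ = familyMul Δ Φ Φ := by
  rw [comulRHS, familyMul]
  simp only [← AlgHom.comp_assoc]
  congr 2
  ext : 1 <;> ext <;> simp [one_def]

end QuantumFamily

open QuantumFamily in
/-- if `B` is commutative, `(A, Δ)` is a "compact quantum semigroup"
(`Δ` a coassociative unital homomorphism) and `(C, Φ)` is the quantum family of all maps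
from `B` to `A`, then there is a unique unital homomorphism `Γ : C → C ⊗ C` with
`(id_B ⊗ Γ) ∘ Φ = (m ⊗ id_{C⊗C}) ∘ (id_B ⊗ F ⊗ id_C) ∘ (Φ ⊗ Φ) ∘ Δ`, and this `Γ` is
coassociative, i.e. `(C, Γ)` is a compact quantum semigroup. -/
theorem quantum_family_comul_exists_unique_and_coassoc
    (A B C : Type) [Ring A] [CommRing B] [Ring C]
    [Algebra ℂ A] [Algebra ℂ B] [Algebra ℂ C]
    (Δ : A →ₐ[ℂ] A ⊗[ℂ] A)
    (hΔ : ((Algebra.TensorProduct.assoc ℂ ℂ ℂ A A A).toAlgHom.comp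
        ((Algebra.TensorProduct.map Δ (AlgHom.id ℂ A)).comp Δ)) =
      (Algebra.TensorProduct.map (AlgHom.id ℂ A) Δ).comp Δ)
    (Φ : A →ₐ[ℂ] B ⊗[ℂ] C)
    (hU : ∀ (D : Type) [Ring D] [Algebra ℂ D] (Ψ : A →ₐ[ℂ] B ⊗[ℂ] D),
      ∃! Γ : C →ₐ[ℂ] D,
        (Algebra.TensorProduct.map (AlgHom.id ℂ B) Γ).comp Φ = Ψ) :
    (∃! Γ : C →ₐ[ℂ] C ⊗[ℂ] C,
        (Algebra.TensorProduct.map (AlgHom.id ℂ B) Γ).comp Φ = comulRHS A B C Δ Φ) ∧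
    (∀ Γ : C →ₐ[ℂ] C ⊗[ℂ] C,
        (Algebra.TensorProduct.map (AlgHom.id ℂ B) Γ).comp Φ = comulRHS A B C Δ Φ →
      ((Algebra.TensorProduct.assoc ℂ ℂ ℂ C C C).toAlgHom.comp
          ((Algebra.TensorProduct.map Γ (AlgHom.id ℂ C)).comp Γ)) =
        (Algebra.TensorProduct.map (AlgHom.id ℂ C) Γ).comp Γ) := by
  refine ⟨hU _ _, fun Γ hΓ => ?_⟩
  rw [comulRHS_eq_familyMul] at hΓ
  have hΦ : (Algebra.TensorProduct.map (AlgHom.id ℂ B) (AlgHom.id ℂ C)).comp Φ = Φ := by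
    rw [Algebra.TensorProduct.map_id, AlgHom.id_comp]
  refine (hU _ ((Algebra.TensorProduct.map (AlgHom.id ℂ B)
    ((Algebra.TensorProduct.map (AlgHom.id ℂ C) Γ).comp Γ)).comp Φ)).unique ?_ rfl
  calc _ = (Algebra.TensorProduct.map (AlgHom.id ℂ B)
          (Algebra.TensorProduct.assoc ℂ ℂ ℂ C C C).toAlgHom).comp
        ((Algebra.TensorProduct.map (AlgHom.id ℂ B)
          (Algebra.TensorProduct.map Γ (AlgHom.id ℂ C))).comp
          ((Algebra.TensorProduct.map (AlgHom.id ℂ B) Γ).comp Φ)) := by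
        simp only [Algebra.TensorProduct.map_id_comp, AlgHom.comp_assoc]
    _ = (Algebra.TensorProduct.map (AlgHom.id ℂ B)
          (Algebra.TensorProduct.assoc ℂ ℂ ℂ C C C).toAlgHom).comp
        (familyMul Δ (familyMul Δ Φ Φ) Φ) := by
        rw [hΓ, map_comp_familyMul, hΓ, hΦ]
    _ = familyMul Δ Φ (familyMul Δ Φ Φ) := familyMul_assoc Δ hΔ Φ Φ Φ
    _ = (Algebra.TensorProduct.map (AlgHom.id ℂ B)
          (Algebra.TensorProduct.map (AlgHom.id ℂ C) Γ)).comp (familyMul Δ Φ Φ) := by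
        rw [map_comp_familyMul, hΓ, hΦ]
    _ = _ := by rw [← hΓ, Algebra.TensorProduct.map_id_comp, AlgHom.comp_assoc]
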